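/- For every r ≥ 0, one has ∫_ℝ log(cosh(√r·z)) φ(z) dz ≤ r·∫_ℝ sech²(√r·z) φ(z) dz = r·(1 - P(r)); in particular, via Gaussian integration by parts, √r·∫_ℝ z·tanh(√r·z) φ(z) dz = r·∫_ℝ sech²(√r·z) φ(z) dz. -/

import Mathlib

/-!
The derivative of `y * tanh y - log (cosh y)` is `y * sech² y`, which has the sign of `y`,
so `log (cosh y) ≤ y * tanh y`. Integrating at `y = √r z` against `φ`, Gaussian integration by
parts `𝔼[Z g(Z)] = 𝔼[g'(Z)]` with `g = tanh (√r ·)` turns the right-hand side into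
`r 𝔼[sech² (√r Z)]`, and `sech² = 1 - tanh²` gives `r (1 - P r)`.
-/

open MeasureTheory Real Filter

/-- The standard normal density. -/
noncomputable def gphi (u : ℝ) : ℝ := Real.exp (-u ^ 2 / 2) / Real.sqrt (2 * Real.pi)

/-- The standard normal CDF. -/
noncomputable def gPhi (u : ℝ) : ℝ := ∫ s in Set.Iic u, gphi s

/-- The standard normal tail. -/
noncomputable def gPhiBar (u : ℝ) : ℝ := 1 - gPhi u

/-- The inverse Mills ratio. -/
noncomputable def mills (u : ℝ) : ℝ := gphi u / gPhiBar u

/-- P(r) = E[tanh²(√r Z)]. -/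
noncomputable def Pfun (r : ℝ) : ℝ := ∫ z : ℝ, Real.tanh (Real.sqrt r * z) ^ 2 * gphi z

/-- B(q). -/
noncomputable def Bfun (κ q : ℝ) : ℝ :=
  (1 - q) * ∫ z : ℝ, mills ((κ - Real.sqrt q * z) / Real.sqrt (1 - q)) ^ 2 * gphi z

/-- C_κ. -/
noncomputable def Ckappa (κ : ℝ) : ℝ := ∫ z : ℝ, max (κ - z) 0 ^ 2 * gphi z

/-- The critical capacity. -/
noncomputable def alphac (κ : ℝ) : ℝ := 2 / (Real.pi * Ckappa κ)

open Topology

namespace Real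

theorem hasDerivAt_tanh (x : ℝ) : HasDerivAt tanh ((1 / cosh x) ^ 2) x := by
  have h := (hasDerivAt_sinh x).div (hasDerivAt_cosh x) (cosh_pos x).ne'
  rw [show sinh / cosh = tanh from funext fun y => (tanh_eq_sinh_div_cosh y).symm] at h
  refine h.congr_deriv ?_
  rw [div_pow, one_pow, ← cosh_sq_sub_sinh_sq x]
  ring

theorem continuous_tanh : Continuous tanh :=
  continuous_iff_continuousAt.2 fun x => (hasDerivAt_tanh x).continuousAt

theorem one_div_cosh_sq (x : ℝ) : (1 / cosh x) ^ 2 = 1 - tanh x ^ 2 := by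
  rw [tanh_eq_sinh_div_cosh]
  field_simp
  linarith [cosh_sq_sub_sinh_sq x]

theorem abs_one_div_cosh_sq_le_one (x : ℝ) : |(1 / cosh x) ^ 2| ≤ 1 := by
  rw [abs_of_nonneg (sq_nonneg _), one_div_cosh_sq]
  linarith [sq_nonneg (tanh x)]

theorem log_cosh_le_mul_tanh (y : ℝ) : log (cosh y) ≤ y * tanh y := by
  wlog hy : 0 ≤ y generalizing y
  · simpa [cosh_neg, tanh_neg] using this (-y) (by linarith)
  let f : ℝ → ℝ := fun t => t * tanh t - log (cosh t)
  have hf : ∀ t, HasDerivAt f (t * (1 / cosh t) ^ 2) t := fun t => by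
    refine (((hasDerivAt_id t).mul (hasDerivAt_tanh t)).sub
      ((hasDerivAt_cosh t).log (cosh_pos t).ne')).congr_deriv ?_
    rw [← tanh_eq_sinh_div_cosh, id]
    ring
  have hmono : MonotoneOn f (Set.Ici 0) :=
    monotoneOn_of_hasDerivWithinAt_nonneg (convex_Ici 0)
      (continuous_iff_continuousAt.2 fun t => (hf t).continuousAt).continuousOn
      (fun t _ => (hf t).hasDerivWithinAt)
      (fun t ht => by rw [interior_Ici] at ht; exact mul_nonneg ht.le (sq_nonneg _))
  have := hmono Set.self_mem_Ici hy hy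
  simp only [f, zero_mul, cosh_zero, log_one, sub_zero] at this
  linarith

end Real

theorem gphi_eq_gaussianPDFReal : gphi = ProbabilityTheory.gaussianPDFReal 0 1 := by
  ext x
  simp [gphi, ProbabilityTheory.gaussianPDFReal, div_eq_inv_mul]

theorem integrable_gphi : Integrable gphi :=
  gphi_eq_gaussianPDFReal ▸ ProbabilityTheory.integrable_gaussianPDFReal 0 1

theorem integral_gphi : ∫ u, gphi u = 1 :=
  gphi_eq_gaussianPDFReal ▸ ProbabilityTheory.integral_gaussianPDFReal_eq_one 0 one_ne_zero

theorem gphi_nonneg (u : ℝ) : 0 ≤ gphi u := by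
  unfold gphi; positivity

theorem hasDerivAt_gphi (u : ℝ) : HasDerivAt gphi (-u * gphi u) u := by
  have h := (((hasDerivAt_pow 2 u).neg.div_const 2).exp).div_const (√(2 * π))
  refine h.congr_deriv ?_
  simp only [gphi, Pi.neg_apply]
  push_cast
  ring

theorem tendsto_gphi_cocompact : Tendsto gphi (cocompact ℝ) (𝓝 0) := by
  have h : Tendsto (fun u : ℝ => -‖u‖ ^ 2 / 2) (cocompact ℝ) atBot :=
    (tendsto_neg_atTop_atBot.comp
      ((tendsto_pow_atTop two_ne_zero).comp tendsto_norm_cocompact_atTop)).atBot_div_const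
      two_pos
  have hexp := (tendsto_exp_atBot.comp h).div_const (√(2 * π))
  simp only [norm_eq_abs, sq_abs, zero_div] at hexp
  exact hexp

theorem integrable_mul_gphi : Integrable fun u => u * gphi u := by
  convert (integrable_mul_exp_neg_mul_sq (one_half_pos (α := ℝ))).div_const (√(2 * π)) using 2
  simp only [gphi]
  ring_nf

theorem integrable_mul_gphi_of_abs_le {g : ℝ → ℝ} {C : ℝ} (hg : AEStronglyMeasurable g)
    (hgC : ∀ x, |g x| ≤ C) : Integrable fun x => g x * gphi x :=
  integrable_gphi.bdd_mul hg (ae_of_all _ hgC)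

theorem integrable_mul_mul_gphi_of_abs_le {g : ℝ → ℝ} {C : ℝ} (hg : AEStronglyMeasurable g)
    (hgC : ∀ x, |g x| ≤ C) : Integrable fun x => x * g x * gphi x := by
  simpa only [mul_comm, mul_left_comm] using integrable_mul_gphi.bdd_mul hg (ae_of_all _ hgC)

theorem integral_mul_mul_gphi_eq_integral_deriv_mul_gphi {g g' : ℝ → ℝ} {C C' : ℝ}
    (hg : ∀ x, HasDerivAt g (g' x) x) (hgC : ∀ x, |g x| ≤ C) (hg'C : ∀ x, |g' x| ≤ C') :
    ∫ x, x * g x * gphi x = ∫ x, g' x * gphi x := by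
  have hgm : AEStronglyMeasurable g :=
    (continuous_iff_continuousAt.2 fun x => (hg x).continuousAt).aestronglyMeasurable
  have hg'm : AEStronglyMeasurable g' := by
    rw [show g' = deriv g from funext fun x => (hg x).deriv.symm]
    exact (measurable_deriv g).aestronglyMeasurable
  have hlim : Tendsto (g * gphi) (cocompact ℝ) (𝓝 0) :=
    isBoundedUnder_le_mul_tendsto_zero (isBoundedUnder_of ⟨C, hgC⟩) tendsto_gphi_cocompact
  have hibp := integral_mul_deriv_eq_deriv_mul (fun x _ => hg x) (fun x _ => hasDerivAt_gphi x)
    ((integrable_mul_mul_gphi_of_abs_le hgm hgC).neg.congr (ae_of_all _ fun x => by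
      simp only [Pi.neg_apply, Pi.mul_apply]; ring)) (integrable_mul_gphi_of_abs_le hg'm hg'C)
    (hlim.mono_left atBot_le_cocompact) (hlim.mono_left atTop_le_cocompact)
  simp only [neg_mul, mul_neg, integral_neg, sub_zero, zero_sub, neg_inj] at hibp
  simpa only [mul_comm, mul_left_comm] using hibp

section

variable (c : ℝ)

theorem integral_mul_tanh_mul_gphi :
    ∫ z, z * tanh (c * z) * gphi z = c * ∫ z, (1 / cosh (c * z)) ^ 2 * gphi z := by
  have hg (z : ℝ) : HasDerivAt (fun z => tanh (c * z)) ((1 / cosh (c * z)) ^ 2 * c) z :=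
    (hasDerivAt_tanh (c * z)).comp z ((hasDerivAt_id z).const_mul c |>.congr_deriv (mul_one c))
  have hg'C (z : ℝ) : |(1 / cosh (c * z)) ^ 2 * c| ≤ |c| := by
    simpa only [abs_mul, one_mul] using
      mul_le_mul_of_nonneg_right (abs_one_div_cosh_sq_le_one (c * z)) (abs_nonneg c)
  rw [integral_mul_mul_gphi_eq_integral_deriv_mul_gphi hg
    (fun z => (abs_tanh_lt_one (c * z)).le) hg'C, ← integral_const_mul]
  simp only [mul_comm, mul_left_comm]

theorem integral_one_div_cosh_sq_mul_gphi :
    ∫ z, (1 / cosh (c * z)) ^ 2 * gphi z = 1 - ∫ z, tanh (c * z) ^ 2 * gphi z := by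
  have htanh : Integrable fun z => tanh (c * z) ^ 2 * gphi z :=
    integrable_mul_gphi_of_abs_le
      ((continuous_tanh.comp (continuous_const_mul c)).pow 2).aestronglyMeasurable
      fun z => by rw [abs_of_nonneg (sq_nonneg _)]; exact (tanh_sq_lt_one (c * z)).le
  calc ∫ z, (1 / cosh (c * z)) ^ 2 * gphi z
      = ∫ z, (gphi z - tanh (c * z) ^ 2 * gphi z) := by
        simp only [one_div_cosh_sq, sub_mul, one_mul]
    _ = 1 - ∫ z, tanh (c * z) ^ 2 * gphi z := by
        rw [integral_sub integrable_gphi htanh, integral_gphi]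

theorem integral_log_cosh_mul_gphi_le :
    ∫ z, log (cosh (c * z)) * gphi z ≤ c * ∫ z, z * tanh (c * z) * gphi z := by
  rw [← integral_const_mul]
  refine integral_mono_of_nonneg
    (ae_of_all _ fun z => mul_nonneg (log_nonneg (one_le_cosh _)) (gphi_nonneg z))
    ((integrable_mul_mul_gphi_of_abs_le
      (continuous_tanh.comp (continuous_const_mul c)).aestronglyMeasurable
      fun z => (abs_tanh_lt_one (c * z)).le).const_mul c)
    (ae_of_all _ fun z => ?_)
  exact (mul_le_mul_of_nonneg_right (log_cosh_le_mul_tanh (c * z)) (gphi_nonneg z)).trans_eq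
    (by ring)

end

theorem stmt_19 (r : ℝ) (hr : 0 ≤ r) :
    (∫ z : ℝ, Real.log (Real.cosh (Real.sqrt r * z)) * gphi z)
      ≤ r * ∫ z : ℝ, (1 / Real.cosh (Real.sqrt r * z)) ^ 2 * gphi z ∧
    r * (∫ z : ℝ, (1 / Real.cosh (Real.sqrt r * z)) ^ 2 * gphi z) = r * (1 - Pfun r) ∧
    Real.sqrt r * (∫ z : ℝ, z * Real.tanh (Real.sqrt r * z) * gphi z)
      = r * ∫ z : ℝ, (1 / Real.cosh (Real.sqrt r * z)) ^ 2 * gphi z := by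
  have hibp : √r * (∫ z, z * tanh (√r * z) * gphi z)
      = r * ∫ z, (1 / cosh (√r * z)) ^ 2 * gphi z := by
    rw [integral_mul_tanh_mul_gphi, ← mul_assoc, Real.mul_self_sqrt hr]
  exact ⟨(integral_log_cosh_mul_gphi_le _).trans_eq hibp,
    by rw [integral_one_div_cosh_sq_mul_gphi, Pfun], hibp⟩
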